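/- arXiv:2201.12623 — 3 statements merged into one kernel-verified Lean document; each statement's English description precedes it below -/
import Mathlib

section
/- Let 0<r<1 and let R⁺ = {z∈ℂ : r<|z|<1, Im z>0}. Then for all z,ζ∈R⁺: r·|ζ−z| < |r²−z·conj(ζ)| < |r²−zζ|. -/
open Complex MeasureTheory Real Filter

noncomputable section

/-- Argument normalized to `[0, 2π)`. -/
def argS (z : ℂ) : ℝ := if 0 ≤ z.arg then z.arg else z.arg + 2 * π

/-- `z ^ β` with the argument of `z` taken in `[0, 2π)`. -/
def powA (β : ℝ) (z : ℂ) : ℂ :=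
  Complex.exp ((β : ℂ) * ((Real.log ‖z‖ : ℂ) + Complex.I * (argS z : ℂ)))

/-- The open sector ring `Ω = {r < |z| < 1, 0 < arg z < π/α}`. -/
def Omega (r α : ℝ) : Set ℂ :=
  {z : ℂ | r < ‖z‖ ∧ ‖z‖ < 1 ∧ 0 < argS z ∧ argS z < π / α}

/-- The outer circular arc `Γ₁`. -/
def Gamma1Set (α : ℝ) : Set ℂ :=
  (fun τ : ℝ => Complex.exp (Complex.I * τ)) '' Set.Icc 0 (π / α)

/-- The inner circular arc `Γ₂`. -/
def Gamma2Set (r α : ℝ) : Set ℂ :=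
  (fun τ : ℝ => (r : ℂ) * Complex.exp (Complex.I * τ)) '' Set.Icc 0 (π / α)

/-- The boundary `∂Ω = [r,1] ∪ Γ₁ ∪ [ϖ,ω] ∪ Γ₂` of the sector ring. -/
def bdryOmega (r α : ℝ) : Set ℂ :=
  ((fun t : ℝ => (t : ℂ)) '' Set.Icc r 1) ∪ Gamma1Set α ∪
    ((fun t : ℝ => (t : ℂ) * Complex.exp (Complex.I * (π / α))) '' Set.Icc r 1) ∪
    Gamma2Set r α

/-- `r^{2αn}` for `n ≥ 1` (here indexed from `0`). -/
def rp (r α : ℝ) (n : ℕ) : ℂ := ((r ^ (2 * α * ((n : ℝ) + 1)) : ℝ) : ℂ)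

/-- The kernel `H₁`. -/
def H1 (r α : ℝ) (z ζ : ℂ) : ℂ :=
  (ζ + z) / (ζ - z) - ((starRingEnd ℂ) ζ + z) / ((starRingEnd ℂ) ζ - z) +
    2 * ∑' n : ℕ, rp r α n *
      (ζ / (rp r α n * ζ - z) - z / (rp r α n * z - ζ)
        - (starRingEnd ℂ) ζ / (rp r α n * (starRingEnd ℂ) ζ - z)
        + z / (rp r α n * z - (starRingEnd ℂ) ζ))

/-- The kernel `H₂`. -/
def H2 (r α : ℝ) (z ζ : ℂ) : ℂ :=
  1 / (ζ - z) - z / (1 - z * ζ) +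
    ∑' n : ℕ, rp r α n *
      (1 / (rp r α n * ζ - z) - z / (ζ * (rp r α n * z - ζ))
        - 1 / (ζ * (rp r α n - z * ζ)) + z / (rp r α n * z * ζ - 1))

/-- The Wirtinger derivative `∂/∂z̄ = ½(∂ₓ + i∂_y)`. -/
def dbar (w : ℂ → ℂ) : ℂ → ℂ := fun z =>
  (1 / 2 : ℂ) * (fderiv ℝ w z 1 + Complex.I * fderiv ℝ w z Complex.I)

/-- The Wirtinger derivative `∂/∂z = ½(∂ₓ - i∂_y)`. -/
def dz (w : ℂ → ℂ) : ℂ → ℂ := fun z =>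
  (1 / 2 : ℂ) * (fderiv ℝ w z 1 - Complex.I * fderiv ℝ w z Complex.I)

/-- `∂_{z̄}ⁿ w = f` on `Ω` in the distributional sense. -/
def DistribDbarPow (Ω : Set ℂ) (n : ℕ) (w f : ℂ → ℂ) : Prop :=
  ∀ φ : ℂ → ℂ, ContDiff ℝ (⊤ : ℕ∞) φ → HasCompactSupport φ → tsupport φ ⊆ Ω →
    ∫ z in Ω, w z * (dbar^[n] φ) z = (-1 : ℂ) ^ n * ∫ z in Ω, f z * φ z

/-- Contour integral `∫_{Γ₁} F(ζ) dζ` (counter-clockwise). -/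
def intGamma1 (α : ℝ) (F : ℂ → ℂ) : ℂ :=
  ∫ s in (0:ℝ)..(π / α),
    F (Complex.exp (Complex.I * s)) * (Complex.I * Complex.exp (Complex.I * s))

/-- Contour integral `∫_{Γ₂} F(ζ) dζ` (clockwise). -/
def intGamma2cw (r α : ℝ) (F : ℂ → ℂ) : ℂ :=
  - ∫ s in (0:ℝ)..(π / α),
      F ((r : ℂ) * Complex.exp (Complex.I * s)) *
        ((r : ℂ) * Complex.I * Complex.exp (Complex.I * s))

/-- Contour integral `∫_{[r,1]} F(ζ) dζ`. -/
def intSegR (r : ℝ) (F : ℂ → ℂ) : ℂ := ∫ t in r..(1:ℝ), F (t : ℂ)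

/-- Contour integral `∫_{[ϖ,ω]} F(ζ) dζ` (from `ϖ = e^{iπ/α}` to `ω = re^{iπ/α}`). -/
def intSegT (r α : ℝ) (F : ℂ → ℂ) : ℂ :=
  ∫ t in (1:ℝ)..r,
    F ((t : ℂ) * Complex.exp (Complex.I * (π / α))) * Complex.exp (Complex.I * (π / α))

/-- Contour integral `∮_{∂Ω} F(ζ) dζ` (counter-clockwise). -/
def bdryInt (r α : ℝ) (F : ℂ → ℂ) : ℂ :=
  intSegR r F + intGamma1 α F + intSegT r α F + intGamma2cw r α F

/-- The open upper half ring `R⁺`. -/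
def Rplus (r : ℝ) : Set ℂ := {z : ℂ | r < ‖z‖ ∧ ‖z‖ < 1 ∧ 0 < z.im}

/-- **Elementary inequalities on the upper half ring** (inequality (4.11)). -/
theorem upper_half_ring_inequalities_r
    (r : ℝ) (hr0 : 0 < r) (hr1 : r < 1) :
    ∀ z ∈ Rplus r, ∀ ζ ∈ Rplus r,
      r * ‖ζ - z‖ < ‖(r : ℂ) ^ 2 - z * (starRingEnd ℂ) ζ‖ ∧
      ‖(r : ℂ) ^ 2 - z * (starRingEnd ℂ) ζ‖ < ‖(r : ℂ) ^ 2 - z * ζ‖ := by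
  rintro z ⟨hz1, hz2, hz3⟩ ζ ⟨hζ1, hζ2, hζ3⟩
  have hz1' : r ^ 2 < z.re ^ 2 + z.im ^ 2 := by
    have := pow_lt_pow_left₀ hz1 hr0.le two_ne_zero
    rwa [Complex.sq_norm, Complex.normSq_apply, ← pow_two, ← pow_two] at this
  have hζ1' : r ^ 2 < ζ.re ^ 2 + ζ.im ^ 2 := by
    have := pow_lt_pow_left₀ hζ1 hr0.le two_ne_zero
    rwa [Complex.sq_norm, Complex.normSq_apply, ← pow_two, ← pow_two] at this
  have hz2' : z.re ^ 2 + z.im ^ 2 < 1 := by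
    have := pow_lt_pow_left₀ hz2 (norm_nonneg z) two_ne_zero
    rw [Complex.sq_norm, Complex.normSq_apply, ← pow_two, ← pow_two] at this
    simpa using this
  have hζ2' : ζ.re ^ 2 + ζ.im ^ 2 < 1 := by
    have := pow_lt_pow_left₀ hζ2 (norm_nonneg ζ) two_ne_zero
    rw [Complex.sq_norm, Complex.normSq_apply, ← pow_two, ← pow_two] at this
    simpa using this
  constructor
  · apply lt_of_pow_lt_pow_left₀ 2 (norm_nonneg _)
    rw [mul_pow, Complex.sq_norm, Complex.sq_norm]
    simp only [Complex.normSq_apply, Complex.sub_re, Complex.sub_im, Complex.mul_re,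
      Complex.mul_im, Complex.conj_re, Complex.conj_im, Complex.ofReal_re, Complex.ofReal_im,
      ← Complex.ofReal_pow, Complex.ofReal_re, Complex.ofReal_im]
    push_cast
    nlinarith [mul_pos (sub_pos.2 hz1') (sub_pos.2 hζ1'), sq_nonneg (z.re*ζ.im - z.im*ζ.re),
      sq_nonneg (z.re - ζ.re), sq_nonneg (z.im - ζ.im)]
  · apply lt_of_pow_lt_pow_left₀ 2 (norm_nonneg _)
    rw [Complex.sq_norm, Complex.sq_norm]
    simp only [Complex.normSq_apply, Complex.sub_re, Complex.sub_im, Complex.mul_re,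
      Complex.mul_im, Complex.conj_re, Complex.conj_im, Complex.ofReal_re, Complex.ofReal_im,
      ← Complex.ofReal_pow, Complex.ofReal_re, Complex.ofReal_im]
    push_cast
    nlinarith [mul_pos (mul_pos hr0 hr0) (mul_pos hz3 hζ3)]
end
end

section
/- Let 0<r<1, R⁺ = {z∈ℂ : r<|z|<1, Im z>0}, and k∈ℕ with k≥1. There exists a constant C (depending only on k) such that for all z₁,z₂,ζ∈R⁺ and all integers j with 0≤j≤k−1: |(ζ−z₁+conj(ζ−z₁))^{k−j−1}/(1−z₁ζ)^{k−j} − (ζ−z₂+conj(ζ−z₂))^{k−j−1}/(1−z₂ζ)^{k−j}| ≤ C·|z₁−z₂|/(|ζ−z₁|·|ζ−z₂|). -/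
open Complex MeasureTheory Real Filter

noncomputable section

private lemma aux_abs_sub_le {z ζ : ℂ} (hz : ‖z‖ ≤ 1)
    (hζ : ‖ζ‖ ≤ 1) (hzi : 0 ≤ z.im) (hζi : 0 ≤ ζ.im) :
    ‖ζ - z‖ ≤ ‖1 - z * ζ‖ := by
  have h1 : Complex.normSq z ≤ 1 := by
    rw [← Complex.sq_norm]; nlinarith [norm_nonneg z]
  have h2 : Complex.normSq ζ ≤ 1 := by
    rw [← Complex.sq_norm]; nlinarith [norm_nonneg ζ]
  rw [Complex.normSq_apply] at h1 h2
  have key : Complex.normSq (ζ - z) ≤ Complex.normSq (1 - z * ζ) := by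
    simp only [Complex.normSq_apply, Complex.sub_re, Complex.sub_im, Complex.mul_re,
      Complex.mul_im, Complex.one_re, Complex.one_im]
    nlinarith [mul_nonneg (sub_nonneg.2 h1) (sub_nonneg.2 h2), mul_nonneg hzi hζi]
  rw [Complex.norm_def, Complex.norm_def]
  exact Real.sqrt_le_sqrt key

private lemma aux_pow_sub_pow (a b : ℂ) (M : ℝ) (ha : ‖a‖ ≤ M) (hb : ‖b‖ ≤ M) :
    ∀ t : ℕ, ‖a ^ (t + 1) - b ^ (t + 1)‖ ≤ (t + 1) * M ^ t * ‖a - b‖ := by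
  have hM : 0 ≤ M := (norm_nonneg a).trans ha
  intro t
  induction t with
  | zero => simp
  | succ t ih =>
    have h1 : a ^ (t + 2) - b ^ (t + 2) = a ^ (t + 1) * (a - b) + (a ^ (t + 1) - b ^ (t + 1)) * b := by
      ring
    calc ‖a ^ (t + 2) - b ^ (t + 2)‖
        ≤ ‖a ^ (t + 1) * (a - b)‖ + ‖(a ^ (t + 1) - b ^ (t + 1)) * b‖ := by
          rw [h1]; exact norm_add_le _ _
      _ ≤ M ^ (t + 1) * ‖a - b‖ + ((t + 1) * M ^ t * ‖a - b‖) * M := by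
          rw [norm_mul, norm_mul, norm_pow]
          gcongr
      _ = (↑(t + 1) + 1) * M ^ (t + 1) * ‖a - b‖ := by push_cast; ring

private lemma aux_twice_re (w : ℂ) :
    ‖w + (starRingEnd ℂ) w‖ ≤ 2 * ‖w‖ := by
  rw [Complex.add_conj]
  calc ‖((2 * w.re : ℝ) : ℂ)‖ = |2 * w.re| := by rw [Complex.norm_real, Real.norm_eq_abs]
    _ = 2 * |w.re| := by rw [abs_mul]; norm_num
    _ ≤ 2 * ‖w‖ := by have := Complex.abs_re_le_norm w; nlinarith [abs_nonneg w.re]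

set_option maxHeartbeats 1600000 in
/-- **A difference estimate for the kernel with denominator `(1−zζ)^{k−j}`**
(used in the proof of Lemma 4.2).  The inequality
`|…| ≤ C·|z₁−z₂|/(|ζ−z₁|·|ζ−z₂|)` is stated in the equivalent multiplied-out form. -/
theorem kernel_difference_estimate_one
    (r : ℝ) (hr0 : 0 < r) (hr1 : r < 1) (k : ℕ) (hk : 1 ≤ k) :
    ∃ C : ℝ, 0 < C ∧
      ∀ z₁ ∈ Rplus r, ∀ z₂ ∈ Rplus r, ∀ ζ ∈ Rplus r, ∀ j < k,
        ‖((ζ - z₁ + (starRingEnd ℂ) (ζ - z₁)) ^ (k - j - 1) / (1 - z₁ * ζ) ^ (k - j)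
              - (ζ - z₂ + (starRingEnd ℂ) (ζ - z₂)) ^ (k - j - 1) / (1 - z₂ * ζ) ^ (k - j))‖ *
          (‖ζ - z₁‖ * ‖ζ - z₂‖) ≤
            C * ‖z₁ - z₂‖ := by
  
  refine ⟨(k + 1) * 2 ^ (k + 1), by positivity, ?_⟩
  intro z₁ hz₁ z₂ hz₂ ζ hζ j hj
  simp only [Rplus, Set.mem_setOf_eq] at hz₁ hz₂ hζ
  obtain ⟨-, hz₁1, hz₁i⟩ := hz₁
  obtain ⟨-, hz₂1, hz₂i⟩ := hz₂
  obtain ⟨-, hζ1, hζi⟩ := hζ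
  set n := k - j - 1 with hn
  have hkj : k - j = n + 1 := by omega
  rw [hkj]
  set A₁ := ζ - z₁ + (starRingEnd ℂ) (ζ - z₁) with hA₁def
  set A₂ := ζ - z₂ + (starRingEnd ℂ) (ζ - z₂) with hA₂def
  set B₁ := 1 - z₁ * ζ with hB₁def
  set B₂ := 1 - z₂ * ζ with hB₂def
  set d := ‖z₁ - z₂‖ with hd
  have hnk : n < k := by omega
  have hd0 : 0 ≤ d := norm_nonneg _
  -- nonvanishing of B₁, B₂
  have hB₁0 : B₁ ≠ 0 := by
    intro h
    have h1 : z₁ * ζ = 1 := by rw [hB₁def] at h; linear_combination -h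
    have h2 : ‖z₁ * ζ‖ < 1 := by
      rw [norm_mul]
      nlinarith [norm_nonneg z₁, norm_nonneg ζ]
    rw [h1, norm_one] at h2; exact lt_irrefl 1 h2
  have hB₂0 : B₂ ≠ 0 := by
    intro h
    have h1 : z₂ * ζ = 1 := by rw [hB₂def] at h; linear_combination -h
    have h2 : ‖z₂ * ζ‖ < 1 := by
      rw [norm_mul]
      nlinarith [norm_nonneg z₂, norm_nonneg ζ]
    rw [h1, norm_one] at h2; exact lt_irrefl 1 h2
  -- key comparisons
  have k1 : ‖ζ - z₁‖ ≤ ‖B₁‖ :=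
    aux_abs_sub_le hz₁1.le hζ1.le hz₁i.le hζi.le
  have k2 : ‖ζ - z₂‖ ≤ ‖B₂‖ :=
    aux_abs_sub_le hz₂1.le hζ1.le hz₂i.le hζi.le
  have hA₁ : ‖A₁‖ ≤ 2 * ‖B₁‖ :=
    (aux_twice_re (ζ - z₁)).trans (by nlinarith)
  have hA₂ : ‖A₂‖ ≤ 2 * ‖B₂‖ :=
    (aux_twice_re (ζ - z₂)).trans (by nlinarith)
  have hAd : ‖A₁ - A₂‖ ≤ 2 * d := by
    have he : A₁ - A₂ = (z₂ - z₁) + (starRingEnd ℂ) (z₂ - z₁) := by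
      simp only [hA₁def, hA₂def, map_sub]; ring
    rw [he]
    calc ‖(z₂ - z₁) + (starRingEnd ℂ) (z₂ - z₁)‖ ≤ 2 * ‖z₂ - z₁‖ :=
          aux_twice_re _
      _ = 2 * d := by rw [hd, norm_sub_rev]
  have hBd : ‖B₁ - B₂‖ ≤ d := by
    have he : B₁ - B₂ = (z₂ - z₁) * ζ := by rw [hB₁def, hB₂def]; ring
    rw [he, norm_mul]
    calc ‖z₂ - z₁‖ * ‖ζ‖ ≤ d * 1 := by
          rw [norm_sub_rev z₂ z₁, ← hd]; exact mul_le_mul_of_nonneg_left hζ1.le hd0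
      _ = d := mul_one d
  clear_value n A₁ A₂ B₁ B₂ d
  have hB₁pos : 0 < ‖B₁‖ := norm_pos_iff.mpr hB₁0
  have hB₂pos : 0 < ‖B₂‖ := norm_pos_iff.mpr hB₂0
  -- cross-term bound
  have hXY : ‖A₁ * B₂ - A₂ * B₁‖ ≤ 4 * (‖B₂‖ * d) := by
    have he : A₁ * B₂ - A₂ * B₁ = (A₁ - A₂) * B₂ + A₂ * (B₂ - B₁) := by ring
    rw [he]
    calc ‖(A₁ - A₂) * B₂ + A₂ * (B₂ - B₁)‖
        ≤ ‖(A₁ - A₂) * B₂‖ + ‖A₂ * (B₂ - B₁)‖ := norm_add_le _ _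
      _ = ‖A₁ - A₂‖ * ‖B₂‖ + ‖A₂‖ * ‖B₂ - B₁‖ := by
          rw [norm_mul, norm_mul]
      _ ≤ (2 * d) * ‖B₂‖ + (2 * ‖B₂‖) * d := by
          have h1 : ‖B₂ - B₁‖ ≤ d := by rwa [← norm_sub_rev] at hBd
          gcongr
      _ = 4 * (‖B₂‖ * d) := by ring
  -- numerator bound
  have hN : ‖A₁ ^ n * B₂ ^ (n + 1) - A₂ ^ n * B₁ ^ (n + 1)‖ ≤
      ((2 : ℝ) ^ n + n * 2 ^ (n + 1)) * (‖B₁‖ ^ n * ‖B₂‖ ^ n) * d := by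
    have hNeq : A₁ ^ n * B₂ ^ (n + 1) - A₂ ^ n * B₁ ^ (n + 1) =
        (A₁ * B₂) ^ n * (B₂ - B₁) + ((A₁ * B₂) ^ n - (A₂ * B₁) ^ n) * B₁ := by
      rw [mul_pow, mul_pow]; ring
    have hab1 : ‖A₁ * B₂‖ ≤ 2 * (‖B₁‖ * ‖B₂‖) := by
      rw [norm_mul]; nlinarith [norm_nonneg B₂]
    have hab2 : ‖A₂ * B₁‖ ≤ 2 * (‖B₁‖ * ‖B₂‖) := by
      rw [norm_mul]; nlinarith [norm_nonneg B₁]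
    have habd : ‖B₂ - B₁‖ ≤ d := by rwa [← norm_sub_rev] at hBd
    have hpow2 : ‖(A₁ * B₂) ^ n - (A₂ * B₁) ^ n‖ * ‖B₁‖ ≤
        n * 2 ^ (n + 1) * (‖B₁‖ ^ n * ‖B₂‖ ^ n) * d := by
      cases n with
      | zero => simp
      | succ t =>
        have h0 := aux_pow_sub_pow (A₁ * B₂) (A₂ * B₁) (2 * (‖B₁‖ * ‖B₂‖))
          hab1 hab2 t
        have h2 : ‖(A₁ * B₂) ^ (t + 1) - (A₂ * B₁) ^ (t + 1)‖ ≤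
            (t + 1) * (2 * (‖B₁‖ * ‖B₂‖)) ^ t * (4 * (‖B₂‖ * d)) := by
          refine h0.trans ?_
          gcongr
        calc ‖(A₁ * B₂) ^ (t + 1) - (A₂ * B₁) ^ (t + 1)‖ * ‖B₁‖
            ≤ ((t + 1) * (2 * (‖B₁‖ * ‖B₂‖)) ^ t * (4 * (‖B₂‖ * d)))
              * ‖B₁‖ :=
              mul_le_mul_of_nonneg_right h2 (norm_nonneg _)
          _ = ↑(t + 1) * 2 ^ ((t + 1) + 1) *
              (‖B₁‖ ^ (t + 1) * ‖B₂‖ ^ (t + 1)) * d := by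
              rw [mul_pow]; push_cast; ring
    calc ‖A₁ ^ n * B₂ ^ (n + 1) - A₂ ^ n * B₁ ^ (n + 1)‖
        ≤ ‖(A₁ * B₂) ^ n * (B₂ - B₁)‖ +
            ‖((A₁ * B₂) ^ n - (A₂ * B₁) ^ n) * B₁‖ := by
          rw [hNeq]; exact norm_add_le _ _
      _ = ‖A₁ * B₂‖ ^ n * ‖B₂ - B₁‖ +
            ‖(A₁ * B₂) ^ n - (A₂ * B₁) ^ n‖ * ‖B₁‖ := by
          rw [norm_mul, norm_mul, norm_pow]
      _ ≤ (2 * (‖B₁‖ * ‖B₂‖)) ^ n * d +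
            n * 2 ^ (n + 1) * (‖B₁‖ ^ n * ‖B₂‖ ^ n) * d := by
          refine add_le_add ?_ hpow2
          gcongr
      _ = ((2 : ℝ) ^ n + n * 2 ^ (n + 1)) * (‖B₁‖ ^ n * ‖B₂‖ ^ n) * d := by
          rw [mul_pow]; ring
  -- constant bound
  have hcnC : ((2 : ℝ) ^ n + n * 2 ^ (n + 1)) ≤ (k + 1) * 2 ^ (k + 1) := by
    have h1 : (2 : ℝ) ^ n ≤ 2 ^ (k + 1) := by
      apply pow_le_pow_right₀ one_le_two; omega
    have h2 : (2 : ℝ) ^ (n + 1) ≤ 2 ^ (k + 1) := by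
      apply pow_le_pow_right₀ one_le_two; omega
    have h3 : (n : ℝ) ≤ k := by exact_mod_cast Nat.le_of_lt hnk
    have h4 : (0 : ℝ) < 2 ^ (n + 1) := by positivity
    nlinarith
  -- put it together
  rw [div_sub_div _ _ (pow_ne_zero _ hB₁0) (pow_ne_zero _ hB₂0),
    show A₁ ^ n * B₂ ^ (n + 1) - B₁ ^ (n + 1) * A₂ ^ n
      = A₁ ^ n * B₂ ^ (n + 1) - A₂ ^ n * B₁ ^ (n + 1) from by ring,
    norm_div, norm_mul, norm_pow, norm_pow, div_mul_eq_mul_div, div_le_iff₀ (by positivity)]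
  calc ‖A₁ ^ n * B₂ ^ (n + 1) - A₂ ^ n * B₁ ^ (n + 1)‖ *
        (‖ζ - z₁‖ * ‖ζ - z₂‖)
      ≤ (((2 : ℝ) ^ n + n * 2 ^ (n + 1)) * (‖B₁‖ ^ n * ‖B₂‖ ^ n) * d) *
          (‖B₁‖ * ‖B₂‖) :=
        mul_le_mul hN (mul_le_mul k1 k2 (norm_nonneg _) (norm_nonneg _))
          (mul_nonneg (norm_nonneg _) (norm_nonneg _)) (by positivity)
    _ = ((2 : ℝ) ^ n + n * 2 ^ (n + 1)) *
          (‖B₁‖ ^ (n + 1) * ‖B₂‖ ^ (n + 1) * d) := by ring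
    _ ≤ ((k + 1) * 2 ^ (k + 1)) *
          (‖B₁‖ ^ (n + 1) * ‖B₂‖ ^ (n + 1) * d) := by
        apply mul_le_mul_of_nonneg_right hcnC
        positivity
    _ = (↑k + 1) * 2 ^ (k + 1) * d * (‖B₁‖ ^ (n + 1) * ‖B₂‖ ^ (n + 1)) := by
        ring
end
end

section
/- Let 0<r<1, R⁺ = {z∈ℂ : r<|z|<1, Im z>0}, and let l,j∈ℕ with 0≤j≤l. Define g*(z,ζ) = ∑_{n=1}^∞ [ r^{2n}/(r^{2n}ζ−z)^{l−j+1} − (−1)^{l−j}·r^{2n(l−j)}/(r^{2n}z−ζ)^{l−j+1} − r^{2(n+1)}·ζ^{l−j−1}/(r^{2n+2}−zζ)^{l−j+1} + (−1)^{l−j}·r^{2n(l−j)}·ζ^{l−j−1}/(r^{2n}zζ−1)^{l−j+1} ]. Then the series defining g*(z,ζ) and g*(z,conj(ζ)) converge for all z,ζ∈R⁺, and there exists a constant C (depending only on l, j and r) such that |g*(z,ζ)| ≤ C and |g*(z,conj(ζ))| ≤ C for all z,ζ∈R⁺. -/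
open Complex MeasureTheory Real Filter

noncomputable section

/-- The `n`-th term (indexed from `0`, corresponding to `n+1 ≥ 1` in the paper)
of the series defining `g*(z,ζ)` (formula (4.8)). -/
def gstarTerm (r : ℝ) (l j : ℕ) (z ζ : ℂ) (n : ℕ) : ℂ :=
  ((r : ℂ) ^ (2 * (n + 1))) / (((r : ℂ) ^ (2 * (n + 1))) * ζ - z) ^ (l - j + 1)
    - (-1 : ℂ) ^ (l - j) * ((r : ℂ) ^ (2 * (n + 1) * (l - j))) /
        (((r : ℂ) ^ (2 * (n + 1))) * z - ζ) ^ (l - j + 1)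
    - ((r : ℂ) ^ (2 * (n + 1) + 2)) * ζ ^ ((l : ℤ) - (j : ℤ) - 1) /
        (((r : ℂ) ^ (2 * (n + 1) + 2)) - z * ζ) ^ (l - j + 1)
    + (-1 : ℂ) ^ (l - j) * ((r : ℂ) ^ (2 * (n + 1) * (l - j))) *
        ζ ^ ((l : ℤ) - (j : ℤ) - 1) /
        (((r : ℂ) ^ (2 * (n + 1))) * z * ζ - 1) ^ (l - j + 1)

lemma abs_sub_lb {c : ℝ} {w v : ℂ} (h : c ≤ ‖v‖ - ‖w‖) :
    c ≤ ‖w - v‖ := by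
  have h2 : ‖v‖ - ‖w‖ ≤ ‖w - v‖ := by rw [norm_sub_rev]; exact norm_sub_norm_le v w
  simpa using le_trans h h2

lemma abs4 (a b c d : ℂ) : ‖a - b - c + d‖
    ≤ ‖a‖ + ‖b‖ + ‖c‖ + ‖d‖ := by
  calc ‖a - b - c + d‖ ≤ ‖a - b - c‖ + ‖d‖ := norm_add_le _ _
    _ ≤ ‖a - b‖ + ‖c‖ + ‖d‖ := add_le_add_left (norm_sub_le _ _) _
    _ ≤ ‖a‖ + ‖b‖ + ‖c‖ + ‖d‖ :=
        add_le_add_left (add_le_add_left (norm_sub_le _ _) _) _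

lemma abs3 (a b c : ℂ) : ‖a - b + c‖
    ≤ ‖a‖ + ‖b‖ + ‖c‖ := by
  calc ‖a - b + c‖ ≤ ‖a - b‖ + ‖c‖ := norm_add_le _ _
    _ ≤ ‖a‖ + ‖b‖ + ‖c‖ := add_le_add_left (norm_sub_le _ _) _

set_option maxHeartbeats 2000000 in
lemma gstar_term_bound (r : ℝ) (hr0 : 0 < r) (hr1 : r < 1) (l j : ℕ) (hj : j ≤ l) :
    ∃ C0 : ℝ, 0 < C0 ∧ ∀ z ζ : ℂ, r < ‖z‖ → ‖z‖ < 1 →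
      r < ‖ζ‖ → ‖ζ‖ < 1 → ∀ n : ℕ,
      ‖gstarTerm r l j z ζ n‖ ≤ C0 * (r ^ 2) ^ n := by
  set k := l - j with hk
  have hd1 : 0 < r - r ^ 2 := by nlinarith
  have hd2 : 0 < r ^ 2 - r ^ 4 := by nlinarith
  have hd3 : 0 < 1 - r ^ 2 := by nlinarith
  refine ⟨2 / (r - r ^ 2) ^ (k + 1) + (1 / r) / (r ^ 2 - r ^ 4) ^ (k + 1)
      + (1 / r) / (1 - r ^ 2) ^ (k + 1) + 2 / (r * (r - r ^ 2) * (1 - r ^ 2)),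
    by positivity, ?_⟩
  intro z ζ hz1 hz2 hζ1 hζ2 n
  have hζ0 : (0:ℝ) < ‖ζ‖ := lt_trans hr0 hζ1
  have hz0 : (0:ℝ) < ‖z‖ := lt_trans hr0 hz1
  have hE0 : (0:ℝ) < (r ^ 2) ^ n := by positivity
  have hE1 : (r ^ 2) ^ n ≤ 1 := pow_le_one₀ (by positivity) (by nlinarith)
  -- powers of r
  have habsA : ‖(r:ℂ) ^ (2 * (n + 1))‖ = r ^ (2 * (n + 1)) := by
    rw [norm_pow, Complex.norm_real, Real.norm_eq_abs, abs_of_pos hr0]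
  have habsA2 : ‖(r:ℂ) ^ (2 * (n + 1) + 2)‖ = r ^ (2 * (n + 1) + 2) := by
    rw [norm_pow, Complex.norm_real, Real.norm_eq_abs, abs_of_pos hr0]
  have habsB : ‖(r:ℂ) ^ (2 * (n + 1) * k)‖ = r ^ (2 * (n + 1) * k) := by
    rw [norm_pow, Complex.norm_real, Real.norm_eq_abs, abs_of_pos hr0]
  have hAE : r ^ (2 * (n + 1)) = r ^ 2 * (r ^ 2) ^ n := by
    rw [pow_mul]; ring
  have hA_le_r2 : r ^ (2 * (n + 1)) ≤ r ^ 2 := by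
    nlinarith [hAE, hE0, hE1, sq_nonneg r]
  have hA_le_E : r ^ (2 * (n + 1)) ≤ (r ^ 2) ^ n := by
    nlinarith [hAE, hE0, sq_nonneg r]
  have hA2_le_E : r ^ (2 * (n + 1) + 2) ≤ (r ^ 2) ^ n := by
    calc r ^ (2 * (n + 1) + 2) ≤ r ^ (2 * (n + 1)) :=
          pow_le_pow_of_le_one hr0.le hr1.le (by omega)
      _ ≤ (r ^ 2) ^ n := hA_le_E
  have hA2_le_r4 : r ^ (2 * (n + 1) + 2) ≤ r ^ 4 :=
    pow_le_pow_of_le_one hr0.le hr1.le (by omega)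
  -- zpow bound
  have hzeta : ‖ζ‖ ^ ((l : ℤ) - (j : ℤ) - 1) ≤ 1 / r := by
    calc ‖ζ‖ ^ ((l : ℤ) - (j : ℤ) - 1)
        ≤ ‖ζ‖ ^ (-1 : ℤ) :=
          zpow_right_anti₀ hζ0 hζ2.le (by omega)
      _ = (‖ζ‖)⁻¹ := zpow_neg_one _
      _ ≤ r⁻¹ := inv_anti₀ hr0 hζ1.le
      _ = 1 / r := (one_div r).symm
  -- denominator bounds
  have hmulζ : r ^ (2 * (n + 1)) * ‖ζ‖ ≤ r ^ 2 :=
    le_trans (mul_le_mul hA_le_r2 hζ2.le hζ0.le (sq_nonneg r)) (le_of_eq (mul_one _))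
  have hmulz : r ^ (2 * (n + 1)) * ‖z‖ ≤ r ^ 2 :=
    le_trans (mul_le_mul hA_le_r2 hz2.le hz0.le (sq_nonneg r)) (le_of_eq (mul_one _))
  have hzz : r ^ 2 ≤ ‖z‖ * ‖ζ‖ := by
    have := mul_le_mul hz1.le hζ1.le hr0.le hz0.le
    nlinarith
  have hden1 : r - r ^ 2 ≤ ‖(r:ℂ) ^ (2 * (n + 1)) * ζ - z‖ := by
    refine abs_sub_lb ?_
    rw [norm_mul, habsA]
    linarith
  have hden2 : r - r ^ 2 ≤ ‖(r:ℂ) ^ (2 * (n + 1)) * z - ζ‖ := by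
    refine abs_sub_lb ?_
    rw [norm_mul, habsA]
    linarith
  have hden3 : r ^ 2 - r ^ 4 ≤ ‖(r:ℂ) ^ (2 * (n + 1) + 2) - z * ζ‖ := by
    refine abs_sub_lb ?_
    rw [norm_mul, habsA2]
    linarith [hA2_le_r4]
  have hden4 : 1 - r ^ 2 ≤ ‖(r:ℂ) ^ (2 * (n + 1)) * z * ζ - 1‖ := by
    refine abs_sub_lb ?_
    rw [norm_mul, norm_mul, habsA, norm_one]
    have h1 : r ^ (2 * (n + 1)) * ‖z‖ * ‖ζ‖ ≤ r ^ 2 * 1 := by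
      have := mul_le_mul hmulz hζ2.le hζ0.le (sq_nonneg r)
      linarith
    linarith
  -- term bounds
  have hT1 : ‖((r:ℂ) ^ (2 * (n + 1))) /
      (((r:ℂ) ^ (2 * (n + 1))) * ζ - z) ^ (k + 1)‖ ≤ (r ^ 2) ^ n / (r - r ^ 2) ^ (k + 1) := by
    simp only [norm_div, norm_mul, norm_pow, Complex.norm_real, Real.norm_eq_abs, abs_of_pos hr0]
    exact div_le_div₀ hE0.le hA_le_E (pow_pos hd1 _) (pow_le_pow_left₀ hd1.le hden1 _)
  have hT3 : ‖((r:ℂ) ^ (2 * (n + 1) + 2)) * ζ ^ ((l : ℤ) - (j : ℤ) - 1) /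
      (((r:ℂ) ^ (2 * (n + 1) + 2)) - z * ζ) ^ (k + 1)‖
      ≤ (r ^ 2) ^ n * (1 / r) / (r ^ 2 - r ^ 4) ^ (k + 1) := by
    simp only [norm_div, norm_mul, norm_pow, norm_zpow, Complex.norm_real, Real.norm_eq_abs, abs_of_pos hr0]
    refine div_le_div₀ (by positivity) ?_ (pow_pos hd2 _) (pow_le_pow_left₀ hd2.le hden3 _)
    exact mul_le_mul hA2_le_E hzeta (zpow_nonneg (norm_nonneg _) _) hE0.le
  rcases lt_or_ge j l with hjl | hlj
  · -- k ≥ 1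
    have hk1 : 1 ≤ k := by omega
    have hB_le_E : r ^ (2 * (n + 1) * k) ≤ (r ^ 2) ^ n := by
      calc r ^ (2 * (n + 1) * k) ≤ r ^ (2 * (n + 1)) :=
            pow_le_pow_of_le_one hr0.le hr1.le (Nat.le_mul_of_pos_right _ hk1)
        _ ≤ (r ^ 2) ^ n := hA_le_E
    have hT2 : ‖(-1 : ℂ) ^ k * ((r:ℂ) ^ (2 * (n + 1) * k)) /
        (((r:ℂ) ^ (2 * (n + 1))) * z - ζ) ^ (k + 1)‖
        ≤ (r ^ 2) ^ n / (r - r ^ 2) ^ (k + 1) := by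
      simp only [norm_div, norm_mul, norm_pow, norm_neg, norm_one, one_pow, one_mul,
        Complex.norm_real, Real.norm_eq_abs, abs_of_pos hr0]
      exact div_le_div₀ hE0.le hB_le_E (pow_pos hd1 _) (pow_le_pow_left₀ hd1.le hden2 _)
    have hT4 : ‖(-1 : ℂ) ^ k * ((r:ℂ) ^ (2 * (n + 1) * k)) *
        ζ ^ ((l : ℤ) - (j : ℤ) - 1) /
        (((r:ℂ) ^ (2 * (n + 1))) * z * ζ - 1) ^ (k + 1)‖
        ≤ (r ^ 2) ^ n * (1 / r) / (1 - r ^ 2) ^ (k + 1) := by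
      simp only [norm_div, norm_mul, norm_pow, norm_zpow, norm_neg, norm_one, one_pow,
        one_mul, Complex.norm_real, Real.norm_eq_abs, abs_of_pos hr0]
      refine div_le_div₀ (by positivity) ?_ (pow_pos hd3 _) (pow_le_pow_left₀ hd3.le hden4 _)
      exact mul_le_mul hB_le_E hzeta (zpow_nonneg (norm_nonneg _) _) hE0.le
    refine le_trans (abs4 _ _ _ _) ?_
    refine le_trans (add_le_add (add_le_add (add_le_add hT1 hT2) hT3) hT4) ?_
    have h1 : 0 < (r - r ^ 2) ^ (k + 1) := pow_pos hd1 _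
    have h2 : 0 < (r ^ 2 - r ^ 4) ^ (k + 1) := pow_pos hd2 _
    have h3 : 0 < (1 - r ^ 2) ^ (k + 1) := pow_pos hd3 _
    have h4 : 0 < r * (r - r ^ 2) * (1 - r ^ 2) := by positivity
    rw [add_mul, add_mul, add_mul]
    have e1 : (r ^ 2) ^ n / (r - r ^ 2) ^ (k + 1) + (r ^ 2) ^ n / (r - r ^ 2) ^ (k + 1)
        = 2 / (r - r ^ 2) ^ (k + 1) * (r ^ 2) ^ n := by ring
    have e2 : (r ^ 2) ^ n * (1 / r) / (r ^ 2 - r ^ 4) ^ (k + 1)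
        = 1 / r / (r ^ 2 - r ^ 4) ^ (k + 1) * (r ^ 2) ^ n := by ring
    have e3 : (r ^ 2) ^ n * (1 / r) / (1 - r ^ 2) ^ (k + 1)
        = 1 / r / (1 - r ^ 2) ^ (k + 1) * (r ^ 2) ^ n := by ring
    have h5 : 0 ≤ 2 / (r * (r - r ^ 2) * (1 - r ^ 2)) * (r ^ 2) ^ n := by positivity
    linarith [e1, e2, e3]
  · -- k = 0, i.e. l = j
    have hlj' : l = j := le_antisymm hlj hj
    subst hlj'
    have hk0 : k = 0 := by omega
    have hζne : ζ ≠ 0 := norm_pos_iff.mp hζ0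
    have hne2 : (r:ℂ) ^ (2 * (n + 1)) * z - ζ ≠ 0 :=
      norm_pos_iff.mp (lt_of_lt_of_le hd1 hden2)
    have hne4 : (r:ℂ) ^ (2 * (n + 1)) * z * ζ - 1 ≠ 0 :=
      norm_pos_iff.mp (lt_of_lt_of_le hd3 hden4)
    have hgs : gstarTerm r l l z ζ n =
        ((r:ℂ) ^ (2 * (n + 1))) / (((r:ℂ) ^ (2 * (n + 1))) * ζ - z)
        - ((r:ℂ) ^ (2 * (n + 1) + 2)) * ζ⁻¹ / (((r:ℂ) ^ (2 * (n + 1) + 2)) - z * ζ)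
        + ((r:ℂ) ^ (2 * (n + 1))) * z * (1 - ζ ^ 2) /
            ((((r:ℂ) ^ (2 * (n + 1))) * z - ζ) *
              (ζ * (((r:ℂ) ^ (2 * (n + 1))) * z * ζ - 1))) := by
      have hne1 : (r:ℂ) ^ (2 * (n + 1)) * ζ - z ≠ 0 :=
        norm_pos_iff.mp (lt_of_lt_of_le hd1 hden1)
      have hne3 : (r:ℂ) ^ (2 * (n + 1) + 2) - z * ζ ≠ 0 :=
        norm_pos_iff.mp (lt_of_lt_of_le hd2 hden3)
      simp only [gstarTerm, Nat.sub_self, pow_zero, one_mul, mul_zero, zero_add, pow_one,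
        sub_self, zero_sub, zpow_neg, zpow_one]
      have key : ζ⁻¹ / ((r:ℂ) ^ (2 * (n + 1)) * z * ζ - 1) - 1 / ((r:ℂ) ^ (2 * (n + 1)) * z - ζ)
          = (r:ℂ) ^ (2 * (n + 1)) * z * (1 - ζ ^ 2) /
            (((r:ℂ) ^ (2 * (n + 1)) * z - ζ) * (ζ * ((r:ℂ) ^ (2 * (n + 1)) * z * ζ - 1))) := by
        rw [div_sub_div _ _ hne4 hne2, div_eq_div_iff (mul_ne_zero hne4 hne2)
          (mul_ne_zero hne2 (mul_ne_zero hζne hne4))]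
        have hinv : ζ * ζ⁻¹ = 1 := mul_inv_cancel₀ hζne
        linear_combination (((r:ℂ) ^ (2 * (n + 1)) * z - ζ) ^ 2 *
          ((r:ℂ) ^ (2 * (n + 1)) * z * ζ - 1)) * hinv
      linear_combination key
    rw [hgs]
    have hb1 : ‖((r:ℂ) ^ (2 * (n + 1))) / (((r:ℂ) ^ (2 * (n + 1))) * ζ - z)‖
        ≤ (1 / (r - r ^ 2)) * (r ^ 2) ^ n := by
      rw [norm_div, habsA]
      calc r ^ (2 * (n + 1)) / ‖(r:ℂ) ^ (2 * (n + 1)) * ζ - z‖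
          ≤ (r ^ 2) ^ n / (r - r ^ 2) := div_le_div₀ hE0.le hA_le_E hd1 hden1
        _ = (1 / (r - r ^ 2)) * (r ^ 2) ^ n := by ring
    have hb3 : ‖((r:ℂ) ^ (2 * (n + 1) + 2)) * ζ⁻¹ /
        (((r:ℂ) ^ (2 * (n + 1) + 2)) - z * ζ)‖
        ≤ ((1 / r) / (r ^ 2 - r ^ 4)) * (r ^ 2) ^ n := by
      rw [norm_div, norm_mul, habsA2, norm_inv]
      have hnum : r ^ (2 * (n + 1) + 2) * (‖ζ‖)⁻¹ ≤ (r ^ 2) ^ n * (1 / r) := by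
        have hi : (‖ζ‖)⁻¹ ≤ 1 / r := by
          rw [one_div]
          exact inv_anti₀ hr0 hζ1.le
        exact mul_le_mul hA2_le_E hi (by positivity) hE0.le
      calc r ^ (2 * (n + 1) + 2) * (‖ζ‖)⁻¹ /
            ‖(r:ℂ) ^ (2 * (n + 1) + 2) - z * ζ‖
          ≤ ((r ^ 2) ^ n * (1 / r)) / (r ^ 2 - r ^ 4) :=
            div_le_div₀ (by positivity) hnum hd2 hden3
        _ = ((1 / r) / (r ^ 2 - r ^ 4)) * (r ^ 2) ^ n := by ring
    have hbc : ‖((r:ℂ) ^ (2 * (n + 1))) * z * (1 - ζ ^ 2) /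
        ((((r:ℂ) ^ (2 * (n + 1))) * z - ζ) *
          (ζ * (((r:ℂ) ^ (2 * (n + 1))) * z * ζ - 1)))‖
        ≤ (2 / (r * (r - r ^ 2) * (1 - r ^ 2))) * (r ^ 2) ^ n := by
      rw [norm_div, norm_mul, norm_mul, habsA, norm_mul, norm_mul]
      have h2 : ‖1 - ζ ^ 2‖ ≤ 2 := by
        calc ‖1 - ζ ^ 2‖ = ‖(1:ℂ) - ζ ^ 2‖ := rfl
          _ ≤ ‖(1:ℂ)‖ + ‖ζ ^ 2‖ := norm_sub_le _ _
          _ ≤ 2 := by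
              simp only [norm_one, norm_pow]
              nlinarith [hζ2, hζ0]
      have hnum : r ^ (2 * (n + 1)) * ‖z‖ * ‖1 - ζ ^ 2‖
          ≤ (r ^ 2) ^ n * 1 * 2 :=
        mul_le_mul (mul_le_mul hA_le_E hz2.le hz0.le hE0.le) h2
          (norm_nonneg _) (by positivity)
      have hinner : r * (1 - r ^ 2)
          ≤ ‖ζ‖ * ‖(r:ℂ) ^ (2 * (n + 1)) * z * ζ - 1‖ :=
        mul_le_mul hζ1.le hden4 hd3.le hζ0.le
      have hdenom : (r - r ^ 2) * (r * (1 - r ^ 2))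
          ≤ ‖(r:ℂ) ^ (2 * (n + 1)) * z - ζ‖ *
            (‖ζ‖ * ‖(r:ℂ) ^ (2 * (n + 1)) * z * ζ - 1‖) :=
        mul_le_mul hden2 hinner (by positivity) (norm_nonneg _)
      calc r ^ (2 * (n + 1)) * ‖z‖ * ‖1 - ζ ^ 2‖ /
            (‖(r:ℂ) ^ (2 * (n + 1)) * z - ζ‖ *
              (‖ζ‖ * ‖(r:ℂ) ^ (2 * (n + 1)) * z * ζ - 1‖))
          ≤ ((r ^ 2) ^ n * 1 * 2) / ((r - r ^ 2) * (r * (1 - r ^ 2))) :=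
            div_le_div₀ (by positivity) hnum (by positivity) hdenom
        _ = (2 / (r * (r - r ^ 2) * (1 - r ^ 2))) * (r ^ 2) ^ n := by
            rw [div_mul_eq_mul_div, div_eq_div_iff (by positivity) (by positivity)]
            ring
    refine le_trans (abs3 _ _ _)
      (le_trans (add_le_add (add_le_add hb1 hb3) hbc) ?_)
    rw [hk0]
    simp only [zero_add, pow_one]
    have hx1 : (1 / (r - r ^ 2)) * (r ^ 2) ^ n ≤ (2 / (r - r ^ 2)) * (r ^ 2) ^ n := by
      have : (1 : ℝ) / (r - r ^ 2) ≤ 2 / (r - r ^ 2) :=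
        div_le_div₀ (by norm_num) (by norm_num) hd1 le_rfl
      exact mul_le_mul_of_nonneg_right this hE0.le
    have hx2 : (0:ℝ) ≤ ((1 / r) / (1 - r ^ 2)) * (r ^ 2) ^ n := by positivity
    rw [add_mul, add_mul, add_mul]
    linarith

/-- **Convergence and uniform boundedness of `g*`** (used in the proof of Lemma 4.1). -/
theorem gstar_summable_and_bounded
    (r : ℝ) (hr0 : 0 < r) (hr1 : r < 1) (l j : ℕ) (hj : j ≤ l) :
    (∀ z ∈ Rplus r, ∀ ζ ∈ Rplus r,
        Summable (gstarTerm r l j z ζ) ∧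
          Summable (gstarTerm r l j z ((starRingEnd ℂ) ζ))) ∧
      ∃ C : ℝ, 0 < C ∧
        ∀ z ∈ Rplus r, ∀ ζ ∈ Rplus r,
          ‖∑' n : ℕ, gstarTerm r l j z ζ n‖ ≤ C ∧
            ‖∑' n : ℕ, gstarTerm r l j z ((starRingEnd ℂ) ζ) n‖ ≤ C := by
  
  obtain ⟨C0, hC0, hbd⟩ := gstar_term_bound r hr0 hr1 l j hj
  have hr21 : r ^ 2 < 1 := by nlinarith
  have hd3 : (0:ℝ) < 1 - r ^ 2 := by nlinarith
  have hgeo : Summable (fun n : ℕ => C0 * (r ^ 2) ^ n) :=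
    (summable_geometric_of_lt_one (by positivity) hr21).mul_left C0
  have key : ∀ z ζ : ℂ, r < ‖z‖ → ‖z‖ < 1 →
      r < ‖ζ‖ → ‖ζ‖ < 1 →
      Summable (gstarTerm r l j z ζ) ∧
        ‖∑' n : ℕ, gstarTerm r l j z ζ n‖ ≤ C0 * (1 - r ^ 2)⁻¹ := by
    intro z ζ h1 h2 h3 h4
    have hb := hbd z ζ h1 h2 h3 h4
    have hn : ∀ n : ℕ, ‖gstarTerm r l j z ζ n‖ ≤ C0 * (r ^ 2) ^ n := fun n => by
      simpa using hb n
    have hsum_norm : Summable fun n : ℕ => ‖gstarTerm r l j z ζ n‖ :=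
      Summable.of_nonneg_of_le (fun n => norm_nonneg _) hn hgeo
    refine ⟨hsum_norm.of_norm, ?_⟩
    calc ‖∑' n : ℕ, gstarTerm r l j z ζ n‖
        = ‖∑' n : ℕ, gstarTerm r l j z ζ n‖ := rfl
      _ ≤ ∑' n : ℕ, ‖gstarTerm r l j z ζ n‖ := norm_tsum_le_tsum_norm hsum_norm
      _ ≤ ∑' n : ℕ, C0 * (r ^ 2) ^ n := Summable.tsum_le_tsum hn hsum_norm hgeo
      _ = C0 * (1 - r ^ 2)⁻¹ := by
          rw [tsum_mul_left, tsum_geometric_of_lt_one (by positivity) hr21]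
  constructor
  · intro z hz ζ hζ
    obtain ⟨hz1, hz2, -⟩ := hz
    obtain ⟨hζ1, hζ2, -⟩ := hζ
    refine ⟨(key z ζ hz1 hz2 hζ1 hζ2).1, ?_⟩
    exact (key z ((starRingEnd ℂ) ζ) hz1 hz2 (by rwa [Complex.norm_conj])
      (by rwa [Complex.norm_conj])).1
  · refine ⟨C0 * (1 - r ^ 2)⁻¹, mul_pos hC0 (inv_pos.mpr hd3), ?_⟩
    intro z hz ζ hζ
    obtain ⟨hz1, hz2, -⟩ := hz
    obtain ⟨hζ1, hζ2, -⟩ := hζ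
    refine ⟨(key z ζ hz1 hz2 hζ1 hζ2).2, ?_⟩
    exact (key z ((starRingEnd ℂ) ζ) hz1 hz2 (by rwa [Complex.norm_conj])
      (by rwa [Complex.norm_conj])).2
end
end
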